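/- If θⁿ : [0,1] → [0,1] converge weakly-* in L^∞([0,1]) to θ, and W ∈ L¹([0,1]²) is fixed, then ∫_{[0,1]²} W(x,y) θⁿ(x) (1 − θⁿ(y)) dx dy → ∫_{[0,1]²} W(x,y) θ(x)(1 − θ(y)) dx dy, provided W is bounded (W ∈ L^∞([0,1]²)). -/

import Mathlib

open MeasureTheory Set Filter

/-- The unit interval. -/
def I01 : Set ℝ := Set.Icc 0 1

/-!
Write `fₙ(x) gₙ(y) - f(x) g(y) = (fₙ(x) - f(x)) gₙ(y) + f(x) (gₙ(y) - g(y))`. Tested against `W`,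
the second term is `gₙ - g` tested against the `L¹` function `y ↦ ∫ W(x, y) f(x) dx`, so it tends
to zero. By Fubini the first term is `∫ gₙ(y) ∫ W(x, y) (fₙ(x) - f(x)) dx dy`; for almost every `y`
the slice `W(·, y)` is integrable, so the inner integral tends to zero by weak-* convergence, and
the uniform bounds on `fₙ, gₙ` make dominated convergence applicable. The theorem is the case
`fₙ = θⁿ`, `gₙ = 1 - θⁿ`.
-/

open Topology

namespace MeasureTheory

variable {α β : Type*} [MeasurableSpace α] [MeasurableSpace β]

def TendstoWeakStar (μ : Measure α) (f : ℕ → α → ℝ) (f₀ : α → ℝ) : Prop :=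
  ∀ φ : α → ℝ, Integrable φ μ →
    Tendsto (fun n => ∫ x, f n x * φ x ∂μ) atTop (𝓝 (∫ x, f₀ x * φ x ∂μ))

variable {μ : Measure α} {ν : Measure β}

theorem TendstoWeakStar.const_sub {f : ℕ → α → ℝ} {f₀ : α → ℝ} (hf : TendstoWeakStar μ f f₀)
    (hf_top : ∀ n, MemLp (f n) ⊤ μ) (hf₀_top : MemLp f₀ ⊤ μ) (c : ℝ) :
    TendstoWeakStar μ (fun n x => c - f n x) (fun x => c - f₀ x) := by
  intro φ hφ
  have h_sub {h : α → ℝ} (hh : MemLp h ⊤ μ) :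
      ∫ x, (c - h x) * φ x ∂μ = c * ∫ x, φ x ∂μ - ∫ x, h x * φ x ∂μ := by
    have hhφ : Integrable (fun x => h x * φ x) μ := hφ.mul_of_top_right hh
    simp_rw [sub_mul, integral_sub (hφ.const_mul c) hhφ, integral_const_mul]
  simp_rw [h_sub (hf_top _), h_sub hf₀_top]
  exact tendsto_const_nhds.sub (hf φ hφ)

theorem Integrable.mul_prod_of_bound {W : α × β → ℝ} (hW : Integrable W (μ.prod ν))
    {f : α → ℝ} {g : β → ℝ} {M N : ℝ} (hf : AEStronglyMeasurable f μ) (hfM : ∀ᵐ x ∂μ, ‖f x‖ ≤ M)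
    (hg : AEStronglyMeasurable g ν) (hgN : ∀ᵐ y ∂ν, ‖g y‖ ≤ N) :
    Integrable (fun p => W p * (f p.1 * g p.2)) (μ.prod ν) := by
  refine hW.mul_bdd (c := M * N) (hf.comp_fst.mul hg.comp_snd) ?_
  filter_upwards [Measure.quasiMeasurePreserving_fst.ae hfM,
    Measure.quasiMeasurePreserving_snd.ae hgN] with p hp₁ hp₂
  rw [norm_mul]
  exact mul_le_mul hp₁ hp₂ (norm_nonneg _) ((norm_nonneg _).trans hp₁)

variable [SFinite μ] [SFinite ν]

theorem integral_mul_prod_symm {W : α × β → ℝ} {f : α → ℝ} {g : β → ℝ}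
    (h : Integrable (fun p => W p * (f p.1 * g p.2)) (μ.prod ν)) :
    ∫ p, W p * (f p.1 * g p.2) ∂μ.prod ν = ∫ y, g y * ∫ x, W (x, y) * f x ∂μ ∂ν := by
  rw [integral_prod_symm _ h]
  congr 1 with y
  rw [← integral_const_mul]
  congr 1 with x
  ring

theorem TendstoWeakStar.tendsto_integral_mul_prod_right {g : ℕ → β → ℝ} {g₀ : β → ℝ}
    (hg : TendstoWeakStar ν g g₀) {W : α × β → ℝ} (hW : Integrable W (μ.prod ν))
    {f : α → ℝ} {M : ℝ} (hf : AEStronglyMeasurable f μ) (hfM : ∀ᵐ x ∂μ, ‖f x‖ ≤ M)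
    (hg_meas : ∀ n, AEStronglyMeasurable (g n) ν) (hgM : ∀ n, ∀ᵐ y ∂ν, ‖g n y‖ ≤ M)
    (hg₀ : AEStronglyMeasurable g₀ ν) (hg₀M : ∀ᵐ y ∂ν, ‖g₀ y‖ ≤ M) :
    Tendsto (fun n => ∫ p, W p * (f p.1 * g n p.2) ∂μ.prod ν) atTop
      (𝓝 (∫ p, W p * (f p.1 * g₀ p.2) ∂μ.prod ν)) := by
  have hWf : Integrable (fun p => W p * f p.1) (μ.prod ν) :=
    hW.mul_bdd hf.comp_fst (Measure.quasiMeasurePreserving_fst.ae hfM)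
  simp_rw [integral_mul_prod_symm (hW.mul_prod_of_bound hf hfM (hg_meas _) (hgM _)),
    integral_mul_prod_symm (hW.mul_prod_of_bound hf hfM hg₀ hg₀M)]
  exact hg _ hWf.integral_prod_right

theorem TendstoWeakStar.tendsto_integral_mul_prod_sub {f : ℕ → α → ℝ} {f₀ : α → ℝ}
    (hf : TendstoWeakStar μ f f₀) {W : α × β → ℝ} (hW : Integrable W (μ.prod ν))
    {g : ℕ → β → ℝ} {M : ℝ}
    (hf_meas : ∀ n, AEStronglyMeasurable (f n) μ) (hfM : ∀ n, ∀ᵐ x ∂μ, ‖f n x‖ ≤ M)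
    (hf₀ : AEStronglyMeasurable f₀ μ) (hf₀M : ∀ᵐ x ∂μ, ‖f₀ x‖ ≤ M)
    (hg_meas : ∀ n, AEStronglyMeasurable (g n) ν) (hgM : ∀ n, ∀ᵐ y ∂ν, ‖g n y‖ ≤ M) :
    Tendsto (fun n => ∫ p, W p * ((f n p.1 - f₀ p.1) * g n p.2) ∂μ.prod ν) atTop (𝓝 0) := by
  have hd_meas n : AEStronglyMeasurable (fun x => f n x - f₀ x) μ := (hf_meas n).sub hf₀
  have hdM n : ∀ᵐ x ∂μ, ‖f n x - f₀ x‖ ≤ M + M := by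
    filter_upwards [hfM n, hf₀M] with x h₁ h₂ using (norm_sub_le _ _).trans (add_le_add h₁ h₂)
  simp_rw [integral_mul_prod_symm
    (hW.mul_prod_of_bound (hd_meas _) (hdM _) (hg_meas _) (hgM _))]
  rw [← integral_zero β ℝ]
  refine tendsto_integral_of_dominated_convergence
    (fun y => M * ((M + M) * ∫ x, ‖W (x, y)‖ ∂μ))
    (fun n => (hg_meas n).mul
      (hW.aestronglyMeasurable.mul (hd_meas n).comp_fst).prod_swap.integral_prod_right')
    ((hW.norm.integral_prod_right.const_mul _).const_mul _) (fun n => ?_) ?_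
  · filter_upwards [hW.prod_left_ae, hgM n] with y hWy hgy
    rw [norm_mul, ← integral_const_mul]
    refine mul_le_mul hgy (norm_integral_le_of_norm_le (hWy.norm.const_mul _) ?_) (norm_nonneg _)
      ((norm_nonneg _).trans hgy)
    filter_upwards [hdM n] with x hx
    rw [norm_mul, mul_comm]
    exact mul_le_mul_of_nonneg_right hx (norm_nonneg _)
  · filter_upwards [hW.prod_left_ae, ae_all_iff.2 hgM] with y hWy hgy
    have h_inner : Tendsto (fun n => ∫ x, W (x, y) * (f n x - f₀ x) ∂μ) atTop (𝓝 0) := by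
      have h := (hf _ hWy).sub_const (∫ x, f₀ x * W (x, y) ∂μ)
      rw [sub_self] at h
      refine h.congr fun n => ?_
      rw [← integral_sub (hWy.bdd_mul (hf_meas n) (hfM n)) (hWy.bdd_mul hf₀ hf₀M)]
      congr 1 with x
      ring
    refine squeeze_zero_norm (fun n => ?_) (by simpa using h_inner.norm.const_mul M)
    rw [norm_mul]
    exact mul_le_mul_of_nonneg_right (hgy n) (norm_nonneg _)

theorem TendstoWeakStar.tendsto_integral_mul_prod {f : ℕ → α → ℝ} {f₀ : α → ℝ}
    {g : ℕ → β → ℝ} {g₀ : β → ℝ} (hf : TendstoWeakStar μ f f₀) (hg : TendstoWeakStar ν g g₀)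
    {W : α × β → ℝ} (hW : Integrable W (μ.prod ν)) {M : ℝ}
    (hf_meas : ∀ n, AEStronglyMeasurable (f n) μ) (hfM : ∀ n, ∀ᵐ x ∂μ, ‖f n x‖ ≤ M)
    (hf₀ : AEStronglyMeasurable f₀ μ) (hf₀M : ∀ᵐ x ∂μ, ‖f₀ x‖ ≤ M)
    (hg_meas : ∀ n, AEStronglyMeasurable (g n) ν) (hgM : ∀ n, ∀ᵐ y ∂ν, ‖g n y‖ ≤ M)
    (hg₀ : AEStronglyMeasurable g₀ ν) (hg₀M : ∀ᵐ y ∂ν, ‖g₀ y‖ ≤ M) :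
    Tendsto (fun n => ∫ p, W p * (f n p.1 * g n p.2) ∂μ.prod ν) atTop
      (𝓝 (∫ p, W p * (f₀ p.1 * g₀ p.2) ∂μ.prod ν)) := by
  have h_split n : ∫ p, W p * ((f n p.1 - f₀ p.1) * g n p.2) ∂μ.prod ν =
      ∫ p, W p * (f n p.1 * g n p.2) ∂μ.prod ν - ∫ p, W p * (f₀ p.1 * g n p.2) ∂μ.prod ν := by
    rw [← integral_sub (hW.mul_prod_of_bound (hf_meas n) (hfM n) (hg_meas n) (hgM n))
      (hW.mul_prod_of_bound hf₀ hf₀M (hg_meas n) (hgM n))]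
    congr 1 with p
    ring
  have h_sub := hf.tendsto_integral_mul_prod_sub hW hf_meas hfM hf₀ hf₀M hg_meas hgM
  have h_right := hg.tendsto_integral_mul_prod_right hW hf₀ hf₀M hg_meas hgM hg₀ hg₀M
  simpa only [h_split, sub_add_cancel, zero_add] using h_sub.add h_right

end MeasureTheory

theorem stmt_8 (θn : ℕ → ℝ → ℝ) (θ : ℝ → ℝ)
    (hθnmeas : ∀ n, Measurable (θn n))
    (hθnrange : ∀ n x, θn n x ∈ Set.Icc (0:ℝ) 1)
    (hθmeas : Measurable θ) (hθrange : ∀ x, θ x ∈ Set.Icc (0:ℝ) 1)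
    (hweak : ∀ φ : ℝ → ℝ, IntegrableOn φ I01 →
      Tendsto (fun n => ∫ x in I01, θn n x * φ x) atTop (nhds (∫ x in I01, θ x * φ x)))
    (W : ℝ → ℝ → ℝ)
    (hWmeas : Measurable (fun p : ℝ × ℝ => W p.1 p.2))
    (hWbdd : ∃ C : ℝ, ∀ x y, |W x y| ≤ C) :
    Tendsto (fun n => ∫ x in I01, ∫ y in I01, W x y * (θn n x * (1 - θn n y))) atTop
      (nhds (∫ x in I01, ∫ y in I01, W x y * (θ x * (1 - θ y)))) := by
  obtain ⟨C, hC⟩ := hWbdd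
  set μ := volume.restrict I01
  have : IsFiniteMeasure μ := isFiniteMeasure_restrict.2 measure_Icc_lt_top.ne
  have hW : Integrable (fun p : ℝ × ℝ => W p.1 p.2) (μ.prod μ) :=
    .of_bound hWmeas.aestronglyMeasurable C (ae_of_all _ fun p => hC p.1 p.2)
  have h_unit {h : ℝ → ℝ} (hh : Measurable h) (hrange : ∀ x, h x ∈ Icc (0 : ℝ) 1) :
      AEStronglyMeasurable h μ ∧ (∀ᵐ x ∂μ, ‖h x‖ ≤ 1) ∧
        AEStronglyMeasurable (fun x => 1 - h x) μ ∧ ∀ᵐ x ∂μ, ‖1 - h x‖ ≤ 1 := by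
    refine ⟨hh.aestronglyMeasurable, ae_of_all _ fun x => ?_,
      (measurable_const.sub hh).aestronglyMeasurable, ae_of_all _ fun x => ?_⟩ <;>
    · rw [Real.norm_eq_abs, abs_le]
      constructor <;> linarith [(hrange x).1, (hrange x).2]
  obtain ⟨hθ_meas, hθM, h1θ_meas, h1θM⟩ := h_unit hθmeas hθrange
  choose hθn_meas hθnM h1θn_meas h1θnM using fun n => h_unit (hθnmeas n) (hθnrange n)
  have hθ_weak : TendstoWeakStar μ θn θ := hweak
  have h1θ_weak := hθ_weak.const_sub (fun n => memLp_top_of_bound (hθn_meas n) 1 (hθnM n))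
    (memLp_top_of_bound hθ_meas 1 hθM) 1
  have h_prod := hθ_weak.tendsto_integral_mul_prod h1θ_weak hW hθn_meas hθnM hθ_meas hθM
    h1θn_meas h1θnM h1θ_meas h1θM
  rw [integral_integral (hW.mul_prod_of_bound hθ_meas hθM h1θ_meas h1θM)]
  refine h_prod.congr fun n => (integral_integral ?_).symm
  exact hW.mul_prod_of_bound (hθn_meas n) (hθnM n) (h1θn_meas n) (h1θnM n)
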